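/- arXiv:2604.01743 — 8 statements merged into one kernel-verified Lean document; each statement's English description precedes it below -/
import Mathlib

section
/- For the 4-dimensional Lotka-Volterra system ẋ = x_i(Ax)_i with antisymmetric matrix A having upper-triangular entries A_{12}=a₁, A_{13}=A_{23}=b₁, A_{14}=A_{24}=c₁, A_{34}=a₂, the function F = (x₁+x₂)^{a₂} x₃^{-c₁} x₄^{b₁} is a constant of motion on the positive orthant. -/
/-
The Lie derivative of `F` is `F` times its logarithmic derivative along the flow,
`a₂ (ẋ₀ + ẋ₁)/(x₀ + x₁) - c₁ ẋ₂/x₂ + b₁ ẋ₃/x₃`.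
By antisymmetry the `a₁`-terms cancel in `x₀ (Ax)₀ + x₁ (Ax)₁ = (x₀ + x₁)(b₁ x₂ + c₁ x₃)`,
so with `s = x₀ + x₁` this is `a₂ (b₁ x₂ + c₁ x₃) - c₁ (a₂ x₃ - b₁ s) + b₁ (-a₂ x₂ - c₁ s) = 0`.
-/

open Real Finset

/-- i-th component of the gradient of `F` at `x`. -/
noncomputable def grad {n : ℕ} (F : (Fin n → ℝ) → ℝ) (x : Fin n → ℝ) (i : Fin n) : ℝ :=
  fderiv ℝ F x (Pi.single i 1)

/-- Lie derivative (directional derivative) of `F` along the vector field `f` at `x`. -/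
noncomputable def lieDeriv {n : ℕ} (F : (Fin n → ℝ) → ℝ) (f : (Fin n → ℝ) → Fin n → ℝ)
    (x : Fin n → ℝ) : ℝ := ∑ i, grad F x i * f x i

/-- The Poisson bracket {F,G}(x) = Σ_{i,j} A_{ij} x_i x_j ∂_iF ∂_jG. -/
noncomputable def pbracket {n : ℕ} (A : Matrix (Fin n) (Fin n) ℝ)
    (F G : (Fin n → ℝ) → ℝ) (x : Fin n → ℝ) : ℝ :=
  ∑ i, ∑ j, A i j * x i * x j * grad F x i * grad G x j

/-- The (possibly inhomogeneous) Lotka-Volterra vector field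
`f_i(x) = x_i (r_i + Σ_j A_{ij} x_j)`. -/
def lvField {n : ℕ} (A : Matrix (Fin n) (Fin n) ℝ) (r : Fin n → ℝ)
    (x : Fin n → ℝ) (i : Fin n) : ℝ := x i * (r i + ∑ j, A i j * x j)

theorem lieDeriv_eq_fderiv_apply {n : ℕ} (F : (Fin n → ℝ) → ℝ) (f : (Fin n → ℝ) → Fin n → ℝ)
    (x : Fin n → ℝ) : lieDeriv F f x = fderiv ℝ F x (f x) := by
  conv_rhs => rw [pi_eq_sum_univ' (f x)]
  simp only [lieDeriv, grad, map_sum, map_smul, smul_eq_mul, mul_comm]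

theorem fderiv_rpow_mul_rpow_mul_rpow_apply {p q r : ℝ} {x : Fin 4 → ℝ}
    (hs : x 0 + x 1 ≠ 0) (h₂ : x 2 ≠ 0) (h₃ : x 3 ≠ 0) (v : Fin 4 → ℝ) :
    fderiv ℝ (fun y : Fin 4 → ℝ => (y 0 + y 1) ^ p * y 2 ^ q * y 3 ^ r) x v =
      (x 0 + x 1) ^ p * x 2 ^ q * x 3 ^ r *
        (p * (v 0 + v 1) / (x 0 + x 1) + q * v 2 / x 2 + r * v 3 / x 3) := by
  have hsum : HasFDerivAt (fun y : Fin 4 → ℝ => y 0 + y 1) _ x :=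
    (hasFDerivAt_apply (𝕜 := ℝ) 0 x).add (hasFDerivAt_apply 1 x)
  have hF : HasFDerivAt (fun y : Fin 4 → ℝ => (y 0 + y 1) ^ p * y 2 ^ q * y 3 ^ r) _ x :=
    ((hsum.rpow_const (p := p) (.inl hs)).mul
      ((hasFDerivAt_apply 2 x).rpow_const (p := q) (.inl h₂))).mul
      ((hasFDerivAt_apply 3 x).rpow_const (p := r) (.inl h₃))
  rw [hF.fderiv]
  simp only [add_apply, smul_apply, smul_eq_mul, Pi.mul_apply,
    ContinuousLinearMap.proj_apply, rpow_sub_one hs, rpow_sub_one h₂, rpow_sub_one h₃]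
  ring

theorem lvField_logDeriv_eq_zero (a₁ a₂ b₁ c₁ : ℝ) {x : Fin 4 → ℝ}
    (hs : x 0 + x 1 ≠ 0) (h₂ : x 2 ≠ 0) (h₃ : x 3 ≠ 0) :
    let v := lvField !![0, a₁, b₁, c₁; -a₁, 0, b₁, c₁; -b₁, -b₁, 0, a₂; -c₁, -c₁, -a₂, 0] 0 x
    a₂ * (v 0 + v 1) / (x 0 + x 1) + -c₁ * v 2 / x 2 + b₁ * v 3 / x 3 = 0 := by
  simp only [lvField, Fin.sum_univ_four, Pi.zero_apply, Matrix.of_apply, Matrix.cons_val',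
    Matrix.cons_val_zero, Matrix.cons_val_one, Matrix.cons_val, Matrix.cons_val_fin_one]
  field_simp
  ring

/-- for the 4-dim LV system of type [1,0,0],
F = (x₁+x₂)^{a₂} x₃^{-c₁} x₄^{b₁} is a constant of motion. -/
theorem stmt5 (a₁ a₂ b₁ c₁ : ℝ) :
    let A : Matrix (Fin 4) (Fin 4) ℝ :=
      !![0, a₁, b₁, c₁; -a₁, 0, b₁, c₁; -b₁, -b₁, 0, a₂; -c₁, -c₁, -a₂, 0]
    let F : (Fin 4 → ℝ) → ℝ :=
      fun x => (x 0 + x 1) ^ a₂ * x 2 ^ (-c₁) * x 3 ^ b₁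
    ∀ x : Fin 4 → ℝ, (∀ i, 0 < x i) → lieDeriv F (lvField A 0) x = 0 := by
  intro A F x hx
  have hs : x 0 + x 1 ≠ 0 := (add_pos (hx 0) (hx 1)).ne'
  rw [lieDeriv_eq_fderiv_apply, fderiv_rpow_mul_rpow_mul_rpow_apply hs (hx 2).ne' (hx 3).ne',
    lvField_logDeriv_eq_zero a₁ a₂ b₁ c₁ hs (hx 2).ne' (hx 3).ne', mul_zero]
end

section
/- For the 4-dimensional Lotka-Volterra system with antisymmetric matrix A having upper entries A_{12}=a₁, A_{13}=a₂, A_{23}=a₃, A_{14}=A_{24}=A_{34}=a₄, the function G = x₁^{-a₃} x₂^{a₂} x₃^{-a₁} (x₁+x₂+x₃)^{a₁-a₂+a₃} is a constant of motion of both the homogeneous system ẋ_i = x_i(Ax)_i and the inhomogeneous system ẋ_i = x_i(r + (Ax)_i) for any constant r. -/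
/-!
Along the Lotka–Volterra field the logarithmic derivative of `G` is
`Σᵢ eᵢ (r + (Ax)ᵢ) + c Σᵢ xᵢ (r + (Ax)ᵢ) / (x₁ + x₂ + x₃)` (sums over `i ≤ 3`), with
exponents `e = (-a₃, a₂, -a₁)` and `c = a₁ - a₂ + a₃`. The vector `e` spans the kernel of the
upper-left `3 × 3` block of `A`, so the first sum is `-c (r + a₄ x₄)`; by antisymmetry of that
block the second term is `c (r + a₄ x₄)`.
-/

open Real Finset

theorem fderiv_monomial_mul_rpow_sum_apply {n : ℕ} (e₀ e₁ e₂ c : ℝ) {x : Fin (n + 3) → ℝ}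
    (h₀ : x 0 ≠ 0) (h₁ : x 1 ≠ 0) (h₂ : x 2 ≠ 0) (hS : x 0 + x 1 + x 2 ≠ 0)
    (v : Fin (n + 3) → ℝ) :
    fderiv ℝ (fun y : Fin (n + 3) → ℝ => y 0 ^ e₀ * y 1 ^ e₁ * y 2 ^ e₂ * (y 0 + y 1 + y 2) ^ c) x v
      = x 0 ^ e₀ * x 1 ^ e₁ * x 2 ^ e₂ * (x 0 + x 1 + x 2) ^ c *
        (e₀ * v 0 / x 0 + e₁ * v 1 / x 1 + e₂ * v 2 / x 2 +
          c * (v 0 + v 1 + v 2) / (x 0 + x 1 + x 2)) := by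
  have hpow (i : Fin (n + 3)) (p : ℝ) (hi : x i ≠ 0) :
      HasFDerivAt (fun y : Fin (n + 3) → ℝ => y i ^ p)
        ((p * x i ^ (p - 1)) • ContinuousLinearMap.proj i) x :=
    (hasFDerivAt_apply (𝕜 := ℝ) i x).rpow_const (Or.inl hi)
  have hsum : HasFDerivAt (fun y : Fin (n + 3) → ℝ => y 0 + y 1 + y 2) _ x :=
    ((hasFDerivAt_apply (𝕜 := ℝ) 0 x).add (hasFDerivAt_apply (𝕜 := ℝ) 1 x)).add
      (hasFDerivAt_apply (𝕜 := ℝ) 2 x)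
  have hG : HasFDerivAt
      (fun y : Fin (n + 3) → ℝ => y 0 ^ e₀ * y 1 ^ e₁ * y 2 ^ e₂ * (y 0 + y 1 + y 2) ^ c) _ x :=
    (((hpow 0 e₀ h₀).mul (hpow 1 e₁ h₁)).mul (hpow 2 e₂ h₂)).mul (hsum.rpow_const (Or.inl hS))
  rw [hG.fderiv]
  simp only [Pi.mul_apply, rpow_sub_one, h₀, h₁, h₂, hS, ne_eq, not_false_eq_true, smul_add,
    add_apply, smul_apply, ContinuousLinearMap.proj_apply, smul_eq_mul]
  field_simp
  ring

/-- for the 4-dim LV system of type [0,1,0],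
G = x₁^{-a₃} x₂^{a₂} x₃^{-a₁} (x₁+x₂+x₃)^{a₁-a₂+a₃} is a constant of motion of
both the homogeneous and the inhomogeneous (rate r) system. -/
theorem stmt6 (a₁ a₂ a₃ a₄ : ℝ) :
    let A : Matrix (Fin 4) (Fin 4) ℝ :=
      !![0, a₁, a₂, a₄; -a₁, 0, a₃, a₄; -a₂, -a₃, 0, a₄; -a₄, -a₄, -a₄, 0]
    let G : (Fin 4 → ℝ) → ℝ :=
      fun x => x 0 ^ (-a₃) * x 1 ^ a₂ * x 2 ^ (-a₁) * (x 0 + x 1 + x 2) ^ (a₁ - a₂ + a₃)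
    ∀ x : Fin 4 → ℝ, (∀ i, 0 < x i) →
      lieDeriv G (lvField A 0) x = 0 ∧
      ∀ r : ℝ, lieDeriv G (lvField A (fun _ => r)) x = 0 := by
  intro A G x hx
  have h₀ := (hx 0).ne'
  have h₁ := (hx 1).ne'
  have h₂ := (hx 2).ne'
  have hS : x 0 + x 1 + x 2 ≠ 0 := by linarith [hx 0, hx 1, hx 2]
  have conserved (r : ℝ) : lieDeriv G (lvField A (fun _ => r)) x = 0 := by
    rw [lieDeriv_eq_fderiv_apply,
      fderiv_monomial_mul_rpow_sum_apply (n := 1) _ _ _ _ h₀ h₁ h₂ hS]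
    refine mul_eq_zero_of_right _ ?_
    simp only [lvField, A, Matrix.of_apply, Matrix.cons_val', Matrix.cons_val_fin_one,
      Matrix.cons_val_zero, Matrix.cons_val_one, Matrix.cons_val, Fin.sum_univ_four, Fin.isValue]
    field_simp
    ring
  exact ⟨conserved 0, conserved⟩
end

section
/- For the 5-dimensional Lotka-Volterra system with antisymmetric matrix A having upper entries A_{12}=a₁, A_{13}=A_{14}=A_{15}=A_{23}=A_{24}=A_{25}=b₁, A_{34}=a₂, A_{35}=a₃, A_{45}=a₄, the function G = x₃^{-a₄} x₄^{a₃} x₅^{-a₂}(x₃+x₄+x₅)^{a₂-a₃+a₄} is a constant of motion and the function C = (x₁/x₂)^{b₁/a₁} · (x₃^{a₄} x₅^{a₂} / x₄^{a₃})^{1/(a₂-a₃+a₄)} is a Casimir of the Poisson bracket {x_i,x_j} = A_{ij}x_i x_j (assuming a₁ ≠ 0 and a₂-a₃+a₄ ≠ 0). -/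
open Real Finset

lemma grad_eq {n : ℕ} {F : (Fin n → ℝ) → ℝ} {L : (Fin n → ℝ) →L[ℝ] ℝ} {x : Fin n → ℝ}
    (h : HasFDerivAt F L x) (i : Fin n) : grad F x i = L (Pi.single i 1) := by
  simp [grad, h.fderiv]

set_option maxHeartbeats 2000000 in
/-- for the 5-dim LV system of type [1,1,0],
G = x₃^{-a₄} x₄^{a₃} x₅^{-a₂}(x₃+x₄+x₅)^{a₂-a₃+a₄} is a constant of motion and
C = (x₁/x₂)^{b₁/a₁} (x₃^{a₄}x₅^{a₂}/x₄^{a₃})^{1/(a₂-a₃+a₄)} is a Casimir. -/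
theorem stmt7 (a₁ a₂ a₃ a₄ b₁ : ℝ) (ha₁ : a₁ ≠ 0) (hden : a₂ - a₃ + a₄ ≠ 0) :
    let A : Matrix (Fin 5) (Fin 5) ℝ :=
      !![0, a₁, b₁, b₁, b₁;
         -a₁, 0, b₁, b₁, b₁;
         -b₁, -b₁, 0, a₂, a₃;
         -b₁, -b₁, -a₂, 0, a₄;
         -b₁, -b₁, -a₃, -a₄, 0]
    let G : (Fin 5 → ℝ) → ℝ :=
      fun x => x 2 ^ (-a₄) * x 3 ^ a₃ * x 4 ^ (-a₂) * (x 2 + x 3 + x 4) ^ (a₂ - a₃ + a₄)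
    let C : (Fin 5 → ℝ) → ℝ :=
      fun x => (x 0 / x 1) ^ (b₁ / a₁) *
        ((x 2 ^ a₄ * x 4 ^ a₂) / x 3 ^ a₃) ^ (1 / (a₂ - a₃ + a₄))
    ∀ x : Fin 5 → ℝ, (∀ i, 0 < x i) →
      lieDeriv G (lvField A 0) x = 0 ∧
      ∀ i : Fin 5, pbracket A (fun y => y i) C x = 0 := by
  intro A G C x hx
  have p0 := hx 0; have p1 := hx 1; have p2 := hx 2; have p3 := hx 3; have p4 := hx 4
  have ps : 0 < x 2 + x 3 + x 4 := by positivity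
  have h0 := hasFDerivAt_apply (𝕜 := ℝ) (0 : Fin 5) x
  have h1 := hasFDerivAt_apply (𝕜 := ℝ) (1 : Fin 5) x
  have h2 := hasFDerivAt_apply (𝕜 := ℝ) (2 : Fin 5) x
  have h3 := hasFDerivAt_apply (𝕜 := ℝ) (3 : Fin 5) x
  have h4 := hasFDerivAt_apply (𝕜 := ℝ) (4 : Fin 5) x
  constructor
  · -- constant of motion
    have hG : HasFDerivAt G
        ((x 2 ^ (-a₄) * x 3 ^ a₃ * x 4 ^ (-a₂)) •
            (((a₂ - a₃ + a₄) * (x 2 + x 3 + x 4) ^ (a₂ - a₃ + a₄ - 1)) •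
              ((ContinuousLinearMap.proj (R := ℝ) (φ := fun _ : Fin 5 => ℝ) 2) + ContinuousLinearMap.proj 3 +
                ContinuousLinearMap.proj 4)) +
          ((x 2 + x 3 + x 4) ^ (a₂ - a₃ + a₄)) •
            ((x 2 ^ (-a₄) * x 3 ^ a₃) • ((-a₂ * x 4 ^ (-a₂ - 1)) • (ContinuousLinearMap.proj (R := ℝ) (φ := fun _ : Fin 5 => ℝ) 4)) +
              x 4 ^ (-a₂) •
                (x 2 ^ (-a₄) • ((a₃ * x 3 ^ (a₃ - 1)) • (ContinuousLinearMap.proj (R := ℝ) (φ := fun _ : Fin 5 => ℝ) 3)) +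
                  x 3 ^ a₃ • ((-a₄ * x 2 ^ (-a₄ - 1)) • (ContinuousLinearMap.proj (R := ℝ) (φ := fun _ : Fin 5 => ℝ) 2))))) x :=
      (((h2.rpow_const (Or.inl p2.ne')).mul (h3.rpow_const (Or.inl p3.ne'))).mul
            (h4.rpow_const (Or.inl p4.ne'))).mul
        (((h2.add h3).add h4).rpow_const (Or.inl ps.ne'))
    simp only [lieDeriv, Fin.sum_univ_five, grad_eq hG, lvField, A]
    simp +decide [Pi.single_apply, Fin.sum_univ_five, Matrix.cons_val_zero,
      Matrix.cons_val_one, Matrix.head_cons, Matrix.cons_val_two, Matrix.cons_val_three,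
      Matrix.cons_val_four, Matrix.tail_cons, Matrix.vecHead, Matrix.vecTail]
    rw [Real.rpow_sub_one p2.ne', Real.rpow_sub_one p3.ne', Real.rpow_sub_one p4.ne',
      Real.rpow_sub_one ps.ne']
    field_simp
    ring
  · -- Casimir
    set d := b₁ / a₁ with hd
    set e := 1 / (a₂ - a₃ + a₄) with he
    have key : ∀ y : Fin 5 → ℝ, (∀ i, 0 < y i) →
        C y = y 0 ^ d * y 1 ^ (-d) * (y 2 ^ (a₄ * e) * y 3 ^ (-(a₃ * e)) * y 4 ^ (a₂ * e)) := by
      intro y hy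
      simp only [C, ← hd, ← he]
      rw [Real.div_rpow (hy 0).le (hy 1).le,
        Real.div_rpow (mul_nonneg (Real.rpow_nonneg (hy 2).le _) (Real.rpow_nonneg (hy 4).le _)) (Real.rpow_nonneg (hy 3).le _),
        Real.mul_rpow (Real.rpow_nonneg (hy 2).le _) (Real.rpow_nonneg (hy 4).le _),
        ← Real.rpow_mul (hy 2).le, ← Real.rpow_mul (hy 4).le, ← Real.rpow_mul (hy 3).le,
        Real.rpow_neg (hy 1).le, Real.rpow_neg (hy 3).le]
      ring
    have hmem : ∀ᶠ y in nhds x, ∀ i, 0 < y i :=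
      Filter.eventually_all.2 fun i => ((continuous_apply i).tendsto x).eventually
        (eventually_gt_nhds (hx i))
    have hC' := ((h0.rpow_const (p := d) (Or.inl p0.ne')).mul
        (h1.rpow_const (p := -d) (Or.inl p1.ne'))).mul
      (((h2.rpow_const (p := a₄ * e) (Or.inl p2.ne')).mul
          (h3.rpow_const (p := -(a₃ * e)) (Or.inl p3.ne'))).mul
        (h4.rpow_const (p := a₂ * e) (Or.inl p4.ne')))
    have hC : HasFDerivAt C _ x :=
      hC'.congr_of_eventuallyEq (hmem.mono fun y hy => key y hy)
    have gp : ∀ (k j : Fin 5), grad (fun y : Fin 5 → ℝ => y k) x j = (Pi.single j (1 : ℝ) : Fin 5 → ℝ) k := by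
      intro k j
      rw [grad_eq (hasFDerivAt_apply k x) j]
      rfl
    intro i
    fin_cases i <;>
    · simp only [pbracket, Fin.sum_univ_five, grad_eq hC, gp, A]
      simp +decide [Pi.single_apply, Matrix.cons_val_zero,
        Matrix.cons_val_one, Matrix.head_cons, Matrix.cons_val_two, Matrix.cons_val_three,
        Matrix.cons_val_four, Matrix.tail_cons, Matrix.vecHead, Matrix.vecTail]
      simp only [Real.rpow_sub_one p0.ne', Real.rpow_sub_one p1.ne', Real.rpow_sub_one p2.ne',
        Real.rpow_sub_one p3.ne', Real.rpow_sub_one p4.ne', hd, he]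
      field_simp
      ring
end

section
/- Let A be an antisymmetric n×n matrix satisfying A_{h,i} = A_{1,i} whenever i > h+1, or whenever i = h+1 and h is odd. Then for each odd r, the function P_{1,r} = x₁+x₂+⋯+x_r is a Darboux polynomial of the Lotka-Volterra system ẋ_i = x_i(Ax)_i with cofactor Σ_{i=r+1}^n A_{1,i} x_i. -/
open Real Finset

/-- if the antisymmetric matrix A satisfies A_{h,i} = A_{1,i} whenever
i > h+1 or (i = h+1 with h odd)  (1-based indexing), then for each odd r the partial
sum P_{1,r} = x₁+⋯+x_r is a Darboux polynomial of the LV system with cofactor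
Σ_{i=r+1}^n A_{1,i} x_i. -/
theorem stmt10 {n : ℕ} (hn : 0 < n) (A : Matrix (Fin n) (Fin n) ℝ) (hA : A.transpose = -A)
    (hcond : ∀ h i : Fin n,
      (h.val + 1 < i.val ∨ (i.val = h.val + 1 ∧ Odd (h.val + 1))) →
      A h i = A ⟨0, hn⟩ i)
    (r : ℕ) (hr : Odd r) (hrn : r ≤ n) :
    ∀ x : Fin n → ℝ,
      ∑ i ∈ Finset.univ.filter (fun i : Fin n => i.val < r), x i * ∑ j, A i j * x j
        = (∑ i ∈ Finset.univ.filter (fun i : Fin n => r ≤ i.val), A ⟨0, hn⟩ i * x i)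
          * ∑ i ∈ Finset.univ.filter (fun i : Fin n => i.val < r), x i := by
  intro x
  classical
  have hanti : ∀ i j : Fin n, A j i = -A i j := by
    intro i j
    have := congrFun (congrFun hA i) j
    simpa [Matrix.transpose_apply] using this
  -- expand inner sums
  have expand : ∀ i : Fin n, x i * ∑ j, A i j * x j = ∑ j, A i j * (x i * x j) := by
    intro i
    rw [Finset.mul_sum]
    apply Finset.sum_congr rfl
    intro j _
    ring
  calc ∑ i ∈ Finset.univ.filter (fun i : Fin n => i.val < r), x i * ∑ j, A i j * x j
      = ∑ i ∈ Finset.univ.filter (fun i : Fin n => i.val < r),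
          ((∑ j ∈ Finset.univ.filter (fun j : Fin n => j.val < r), A i j * (x i * x j))
            + ∑ j ∈ Finset.univ.filter (fun j : Fin n => ¬ j.val < r), A i j * (x i * x j)) := by
        apply Finset.sum_congr rfl
        intro i _
        rw [expand i, Finset.sum_filter_add_sum_filter_not]
    _ = (∑ i ∈ Finset.univ.filter (fun i : Fin n => i.val < r),
          ∑ j ∈ Finset.univ.filter (fun j : Fin n => j.val < r), A i j * (x i * x j))
        + ∑ i ∈ Finset.univ.filter (fun i : Fin n => i.val < r),
          ∑ j ∈ Finset.univ.filter (fun j : Fin n => ¬ j.val < r), A i j * (x i * x j) := by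
        rw [Finset.sum_add_distrib]
    _ = 0 + ∑ i ∈ Finset.univ.filter (fun i : Fin n => i.val < r),
          ∑ j ∈ Finset.univ.filter (fun j : Fin n => ¬ j.val < r), A i j * (x i * x j) := by
        congr 1
        have hswap : (∑ i ∈ Finset.univ.filter (fun i : Fin n => i.val < r),
            ∑ j ∈ Finset.univ.filter (fun j : Fin n => j.val < r), A i j * (x i * x j))
            = -∑ i ∈ Finset.univ.filter (fun i : Fin n => i.val < r),
              ∑ j ∈ Finset.univ.filter (fun j : Fin n => j.val < r), A i j * (x i * x j) := by
          conv_lhs => rw [Finset.sum_comm]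
          rw [← Finset.sum_neg_distrib]
          apply Finset.sum_congr rfl
          intro i _
          rw [← Finset.sum_neg_distrib]
          apply Finset.sum_congr rfl
          intro j _
          rw [hanti j i]
          ring
        linarith
    _ = ∑ j ∈ Finset.univ.filter (fun j : Fin n => ¬ j.val < r),
          ∑ i ∈ Finset.univ.filter (fun i : Fin n => i.val < r), A ⟨0, hn⟩ j * (x j * x i) := by
        rw [zero_add, Finset.sum_comm]
        apply Finset.sum_congr rfl
        intro j hj
        apply Finset.sum_congr rfl
        intro i hi
        simp only [Finset.mem_filter, Finset.mem_univ, true_and] at hi hj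
        have hij : i.val + 1 ≤ j.val := by omega
        have hAij : A i j = A ⟨0, hn⟩ j := by
          apply hcond
          rcases lt_or_eq_of_le hij with h | h
          · exact Or.inl h
          · right
            refine ⟨h.symm, ?_⟩
            have : i.val + 1 = r := by omega
            rw [this]; exact hr
        rw [hAij]; ring
    _ = (∑ i ∈ Finset.univ.filter (fun i : Fin n => r ≤ i.val), A ⟨0, hn⟩ i * x i)
          * ∑ i ∈ Finset.univ.filter (fun i : Fin n => i.val < r), x i := by
        rw [Finset.sum_mul]
        apply Finset.sum_congr
        · apply Finset.filter_congr; intro i _; simp [not_lt]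
        · intro j _
          rw [Finset.mul_sum]
          apply Finset.sum_congr rfl
          intro i _
          ring
end

section
/- Let A be an antisymmetric n×n matrix with Poisson bracket {x_i,x_j} = A_{ij}x_ix_j, satisfying A_{h,i} = A_{1,i} whenever i > h+1 or i = h+1 with h odd. Then for j > i+1, or j = i+1 with i odd, we have {P_{1,i}, x_j} = A_{1,j} P_{1,i} x_j, where P_{1,i} = x₁+⋯+x_i. Consequently, any weight-zero homogeneous product of powers of P_{1,2i+1}, P_{1,2i-1}, x_{2i}, x_{2i+1} Poisson commutes with x_j for all j > 2i+1. -/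
/-! The bracket with a coordinate is `{F, x_j} = x_j ∑_k A_{kj} x_k ∂_k F`. The structural condition
on `A` makes `A_{kj} = A_{1j}` for every coordinate `k` on which `F` depends, so
`{F, x_j} = A_{1j} x_j ∑_k x_k ∂_k F`. For `F = P_{1,m}` the Euler sum is `P_{1,m}` itself; for a
weight-zero product `F` is constant on rays, so the Euler sum vanishes. -/

open Real Finset

section Calculus

variable {E G : Type*} [NormedAddCommGroup E] [NormedSpace ℝ E] [NormedAddCommGroup G]
  [NormedSpace ℝ G]

theorem fderiv_apply_eq_zero_of_eventually_const_line {f : E → G} {x v : E}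
    (hf : ∀ᶠ t in nhds (0 : ℝ), f (x + t • v) = f x) : fderiv ℝ f x v = 0 := by
  by_cases hdiff : DifferentiableAt ℝ f x
  · have hline : HasDerivAt (fun t : ℝ => f (x + t • v)) (fderiv ℝ f x v) 0 := by
      have h := hdiff.hasFDerivAt.comp_hasDerivAt_of_eq (x := (0 : ℝ))
        (((hasDerivAt_id (0 : ℝ)).smul_const v).const_add x) (by simp)
      simp only [id, one_smul] at h
      exact h
    have hconst : HasDerivAt (fun t : ℝ => f (x + t • v)) 0 0 :=
      (hasDerivAt_const (0 : ℝ) (f x)).congr_of_eventuallyEq hf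
    exact hline.unique hconst
  · simp [fderiv_zero_of_not_differentiableAt hdiff]

end Calculus

section Gradient

variable {n : ℕ}

theorem grad_eq_zero_of_dependsOn {F : (Fin n → ℝ) → ℝ} {S : Set (Fin n)} (hF : DependsOn F S)
    (x : Fin n → ℝ) {i : Fin n} (hi : i ∉ S) : grad F x i = 0 :=
  fderiv_apply_eq_zero_of_eventually_const_line <| Filter.Eventually.of_forall fun t =>
    hF fun k hk => by simp [show k ≠ i from fun h => hi (h ▸ hk)]

theorem sum_mul_grad_eq_fderiv (F : (Fin n → ℝ) → ℝ) (x : Fin n → ℝ) :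
    ∑ i, x i * grad F x i = fderiv ℝ F x x := by
  rw [congrArg (fderiv ℝ F x) (pi_eq_sum_univ' x)]
  simp [grad, map_sum, map_smul]

theorem sum_mul_grad_eq_zero_of_forall_smul {F : (Fin n → ℝ) → ℝ} {x : Fin n → ℝ}
    (hF : ∀ t : ℝ, 0 < t → F (t • x) = F x) : ∑ i, x i * grad F x i = 0 := by
  rw [sum_mul_grad_eq_fderiv]
  refine fderiv_apply_eq_zero_of_eventually_const_line ?_
  filter_upwards [Ioi_mem_nhds (show (-1 : ℝ) < 0 by norm_num)] with t ht
  rw [show x + t • x = (1 + t) • x by module]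
  exact hF _ (by linarith [Set.mem_Ioi.mp ht])

theorem grad_sum_coord (s : Finset (Fin n)) (x : Fin n → ℝ) (i : Fin n) :
    grad (fun y => ∑ k ∈ s, y k) x i = if i ∈ s then 1 else 0 := by
  have hderiv : HasFDerivAt (fun y : Fin n → ℝ => ∑ k ∈ s, y k)
      (∑ k ∈ s, ContinuousLinearMap.proj (R := ℝ) (φ := fun _ : Fin n => ℝ) k) x :=
    HasFDerivAt.fun_sum fun k _ => hasFDerivAt_apply k x
  rw [grad, hderiv.fderiv]
  simp [Pi.single_apply]

theorem grad_coord (j : Fin n) (x : Fin n → ℝ) (i : Fin n) :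
    grad (fun y => y j) x i = if i = j then 1 else 0 := by
  simpa using grad_sum_coord {j} x i

end Gradient

section Bracket

variable {n : ℕ} (A : Matrix (Fin n) (Fin n) ℝ)

theorem pbracket_coord_right (F : (Fin n → ℝ) → ℝ) (j : Fin n) (x : Fin n → ℝ) :
    pbracket A F (fun y => y j) x = ∑ k, A k j * x k * x j * grad F x k := by
  unfold pbracket
  refine Finset.sum_congr rfl fun k _ => ?_
  simp [grad_coord]

theorem pbracket_coord_right_of_dependsOn {F : (Fin n → ℝ) → ℝ} {S : Set (Fin n)}
    (hF : DependsOn F S) {j : Fin n} {c : ℝ} (hA : ∀ k ∈ S, A k j = c) (x : Fin n → ℝ) :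
    pbracket A F (fun y => y j) x = c * x j * ∑ k, x k * grad F x k := by
  rw [pbracket_coord_right, Finset.mul_sum]
  refine Finset.sum_congr rfl fun k _ => ?_
  by_cases hk : k ∈ S
  · rw [hA k hk]; ring
  · simp [grad_eq_zero_of_dependsOn hF x hk]

theorem pbracket_sum_coord_of_forall_mem {s : Finset (Fin n)} {j : Fin n} {c : ℝ}
    (hA : ∀ k ∈ s, A k j = c) (x : Fin n → ℝ) :
    pbracket A (fun y => ∑ k ∈ s, y k) (fun y => y j) x = c * (∑ k ∈ s, x k) * x j := by
  have hdep : DependsOn (fun y : Fin n → ℝ => ∑ k ∈ s, y k) (s : Set (Fin n)) :=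
    fun y y' h => Finset.sum_congr rfl fun k hk => h k hk
  rw [pbracket_coord_right_of_dependsOn A hdep (by simpa using hA)]
  simp only [grad_sum_coord, mul_ite, mul_one, mul_zero, Finset.sum_ite_mem, Finset.univ_inter]
  ring

end Bracket

theorem mul_rpow_four_eq_of_add_eq_zero {α β γ δ t a b c d : ℝ} (hsum : α + β + γ + δ = 0)
    (ht : 0 < t) (ha : 0 ≤ a) (hb : 0 ≤ b) (hc : 0 ≤ c) (hd : 0 ≤ d) :
    (t * a) ^ α * (t * b) ^ β * (t * c) ^ γ * (t * d) ^ δ = a ^ α * b ^ β * c ^ γ * d ^ δ := by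
  have hpow : t ^ α * t ^ β * t ^ γ * t ^ δ = 1 := by
    rw [← rpow_add ht, ← rpow_add ht, ← rpow_add ht, hsum, rpow_zero]
  simp only [mul_rpow ht.le ha, mul_rpow ht.le hb, mul_rpow ht.le hc, mul_rpow ht.le hd]
  linear_combination (a ^ α * b ^ β * c ^ γ * d ^ δ) * hpow

theorem entry_eq_entry_zero_of_lt {n : ℕ} (hn : 0 < n) {A : Matrix (Fin n) (Fin n) ℝ}
    (hcond : ∀ h i : Fin n,
      (h.val + 1 < i.val ∨ (i.val = h.val + 1 ∧ Odd (h.val + 1))) →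
      A h i = A ⟨0, hn⟩ i)
    {m : ℕ} {j : Fin n} (hj : m < j.val ∨ (j.val = m ∧ Odd m)) {k : Fin n} (hk : k.val < m) :
    A k j = A ⟨0, hn⟩ j := by
  apply hcond
  rcases hj with hj | ⟨rfl, hodd⟩
  · left; omega
  · rcases Nat.lt_or_ge (k.val + 1) j.val with hlt | hge
    · left; exact hlt
    · right; exact ⟨by omega, by rwa [show k.val + 1 = j.val by omega]⟩

theorem stmt11_general {n : ℕ} (hn : 0 < n) (A : Matrix (Fin n) (Fin n) ℝ)
    (hcond : ∀ h i : Fin n,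
      (h.val + 1 < i.val ∨ (i.val = h.val + 1 ∧ Odd (h.val + 1))) →
      A h i = A ⟨0, hn⟩ i) :
    (∀ (m : ℕ) (j : Fin n),
      (m + 1 < j.val + 1 ∨ (j.val + 1 = m + 1 ∧ Odd m)) →
      ∀ x : Fin n → ℝ,
        pbracket A (fun y => ∑ k ∈ Finset.univ.filter (fun k : Fin n => k.val < m), y k)
            (fun y => y j) x
          = A ⟨0, hn⟩ j * (∑ k ∈ Finset.univ.filter (fun k : Fin n => k.val < m), x k) * x j)
    ∧ (∀ (i : ℕ), 1 ≤ i → ∀ (h1 : 2 * i - 1 < n) (h2 : 2 * i < n) (α β γ δ : ℝ),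
        α + β + γ + δ = 0 →
        ∀ j : Fin n, 2 * i + 1 ≤ j.val →
        ∀ x : Fin n → ℝ, (∀ k, 0 < x k) →
        pbracket A
          (fun y =>
            (∑ k ∈ Finset.univ.filter (fun k : Fin n => k.val < 2 * i + 1), y k) ^ α
            * (∑ k ∈ Finset.univ.filter (fun k : Fin n => k.val < 2 * i - 1), y k) ^ β
            * (y ⟨2 * i - 1, h1⟩) ^ γ * (y ⟨2 * i, h2⟩) ^ δ)
          (fun y => y j) x = 0) := by
  refine ⟨fun m j hj x => pbracket_sum_coord_of_forall_mem A (fun k hk => ?_) x,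
    fun i _ h1 h2 α β γ δ hsum j hj x hx => ?_⟩
  · exact entry_eq_entry_zero_of_lt hn hcond (hj.imp (by omega) fun h => ⟨by omega, h.2⟩)
      (Finset.mem_filter.mp hk).2
  have hA : ∀ k ∈ {k : Fin n | k.val < 2 * i + 1}, A k j = A ⟨0, hn⟩ j := fun k hk =>
    entry_eq_entry_zero_of_lt hn hcond (m := 2 * i + 1)
      (hj.lt_or_eq.imp id fun h => ⟨h.symm, odd_two_mul_add_one i⟩) hk
  rw [pbracket_coord_right_of_dependsOn A ?_ hA, sum_mul_grad_eq_zero_of_forall_smul, mul_zero]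
  · intro t ht
    simp only [Pi.smul_apply, smul_eq_mul, ← Finset.mul_sum]
    exact mul_rpow_four_eq_of_add_eq_zero hsum ht (Finset.sum_nonneg fun k _ => (hx k).le)
      (Finset.sum_nonneg fun k _ => (hx k).le) (hx _).le (hx _).le
  · intro y y' h
    have hs : ∀ s : Finset (Fin n), (∀ k ∈ s, k.val < 2 * i + 1) → ∑ k ∈ s, y k = ∑ k ∈ s, y' k :=
      fun s hs => Finset.sum_congr rfl fun k hk => h k (hs k hk)
    dsimp only
    rw [hs _ (fun k hk => (Finset.mem_filter.mp hk).2), hs _ (fun k hk => by simp at hk; omega),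
      h _ (show 2 * i - 1 < 2 * i + 1 by omega), h _ (show 2 * i < 2 * i + 1 by omega)]

/-- under the structural condition on the antisymmetric matrix A,
{P_{1,m}, x_j} = A_{1,j} P_{1,m} x_j when j > m+1 or (j = m+1 with m odd)
(1-based), and consequently any weight-zero homogeneous product of powers of
P_{1,2i+1}, P_{1,2i-1}, x_{2i}, x_{2i+1} Poisson commutes with x_j for all j > 2i+1. -/
theorem stmt11 {n : ℕ} (hn : 0 < n) (A : Matrix (Fin n) (Fin n) ℝ) (hA : A.transpose = -A)
    (hcond : ∀ h i : Fin n,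
      (h.val + 1 < i.val ∨ (i.val = h.val + 1 ∧ Odd (h.val + 1))) →
      A h i = A ⟨0, hn⟩ i) :
    (∀ (m : ℕ) (j : Fin n),
      (m + 1 < j.val + 1 ∨ (j.val + 1 = m + 1 ∧ Odd m)) →
      ∀ x : Fin n → ℝ,
        pbracket A (fun y => ∑ k ∈ Finset.univ.filter (fun k : Fin n => k.val < m), y k)
            (fun y => y j) x
          = A ⟨0, hn⟩ j * (∑ k ∈ Finset.univ.filter (fun k : Fin n => k.val < m), x k) * x j)
    ∧ (∀ (i : ℕ), 1 ≤ i → ∀ (h1 : 2 * i - 1 < n) (h2 : 2 * i < n) (α β γ δ : ℝ),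
        α + β + γ + δ = 0 →
        ∀ j : Fin n, 2 * i + 1 ≤ j.val →
        ∀ x : Fin n → ℝ, (∀ k, 0 < x k) →
        pbracket A
          (fun y =>
            (∑ k ∈ Finset.univ.filter (fun k : Fin n => k.val < 2 * i + 1), y k) ^ α
            * (∑ k ∈ Finset.univ.filter (fun k : Fin n => k.val < 2 * i - 1), y k) ^ β
            * (y ⟨2 * i - 1, h1⟩) ^ γ * (y ⟨2 * i, h2⟩) ^ δ)
          (fun y => y j) x = 0) :=
  stmt11_general hn A hcond
end

section
/- With the matrix A of the even-dimensional type [j,0,0] Lotka-Volterra system (blocks J_i, K^i_k = ((b_ic_k−b_kc_i)/a_{j+1})·1, and L as above) and the Poisson bracket {x_i,x_k}=A_{ik}x_ix_k, the integrals F_i = (x_{2i−1}+x_{2i})^{a_{j+1}} x_{n−1}^{−c_i} x_n^{b_i} pairwise Poisson commute: {F_i, F_k} = 0 for all 1 ≤ i, k ≤ j. -/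
open Real Finset

/-- The antisymmetric matrix of the even-dimensional type [j,0,0] LV system:
diagonal 2×2 blocks J_p = [[0,a_p],[-a_p,0]] (p = 1,…,j), off-diagonal 2×2 blocks
K^p_q = ((b_p c_q − b_q c_p)/a_{j+1})·𝟙 for p < q, last block column L with rows
(b_p, c_p) repeated twice, and final diagonal block J_{j+1} (parameters 1-based). -/
noncomputable def typeJ00Mat (j : ℕ) (a b c : ℕ → ℝ) :
    Matrix (Fin (2 * (j + 1))) (Fin (2 * (j + 1))) ℝ :=
  Matrix.of fun r s =>
    let R := r.val; let S := s.val
    if R = S then 0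
    else if R < 2 * j ∧ S < 2 * j then
      (if R / 2 = S / 2 then (if R < S then a (R / 2 + 1) else -a (R / 2 + 1))
       else (b (R / 2 + 1) * c (S / 2 + 1) - b (S / 2 + 1) * c (R / 2 + 1)) / a (j + 1))
    else if R < 2 * j then (if S = 2 * j then b (R / 2 + 1) else c (R / 2 + 1))
    else if S < 2 * j then -(if R = 2 * j then b (S / 2 + 1) else c (S / 2 + 1))
    else (if R < S then a (j + 1) else -a (j + 1))

/-- The integral F_i = (x_{2i−1}+x_{2i})^{a_{j+1}} x_{n−1}^{−c_i} x_n^{b_i}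
of the type [j,0,0] system, for i = 1,…,j (here i : Fin j is 0-based). -/
noncomputable def typeJ00F (j : ℕ) (a b c : ℕ → ℝ) (i : Fin j)
    (y : Fin (2 * (j + 1)) → ℝ) : ℝ :=
  (y ⟨2 * i.val, by have := i.isLt; omega⟩ + y ⟨2 * i.val + 1, by have := i.isLt; omega⟩)
      ^ a (j + 1)
    * (y ⟨2 * j, by omega⟩) ^ (-(c (i.val + 1)))
    * (y ⟨2 * j + 1, by omega⟩) ^ (b (i.val + 1))

/-! Each `F_i` is a product of real powers, so its logarithmic derivative is explicit and
`x_m ∂_m F_i = F_i w^i_m`, where `w^i` equals `a_{j+1} x_m / (x_{2i-1} + x_{2i})` on the `i`-th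
block, `-c_i` at `n - 1`, `b_i` at `n`, and `0` elsewhere. Hence `{F_i, F_k} = F_i F_k ⟨w^i, A w^k⟩`.
For `i = k` this vanishes because `A` is antisymmetric. For `i ≠ k` the entries of `A` are constant
on each pair of blocks met by `w^i` and `w^k`, the block weights of `w^i` sum to `a_{j+1}`, and
`⟨w^i, A w^k⟩` collapses to `a_{j+1}` times a sum of terms `± b_i c_k, ± b_k c_i` that cancel. -/

open Matrix

/-- `L` is the derivative of `log |f|` at `x` (when `f x ≠ 0`). -/
def HasLogFDerivAt {E : Type*} [NormedAddCommGroup E] [NormedSpace ℝ E]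
    (f : E → ℝ) (L : E →L[ℝ] ℝ) (x : E) : Prop :=
  HasFDerivAt f (f x • L) x

namespace HasLogFDerivAt

variable {E : Type*} [NormedAddCommGroup E] [NormedSpace ℝ E] {f g : E → ℝ}
  {L M : E →L[ℝ] ℝ} {x : E}

lemma of_hasFDerivAt {f' : E →L[ℝ] ℝ} (hf : HasFDerivAt f f' x) (hx : f x ≠ 0) :
    HasLogFDerivAt f ((f x)⁻¹ • f') x := by
  rwa [HasLogFDerivAt, smul_smul, mul_inv_cancel₀ hx, one_smul]

lemma mul (hf : HasLogFDerivAt f L x) (hg : HasLogFDerivAt g M x) :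
    HasLogFDerivAt (fun y => f y * g y) (L + M) x := by
  refine (HasFDerivAt.mul hf hg).congr_fderiv ?_
  rw [smul_add, smul_smul, smul_smul, add_comm, mul_comm (g x)]

lemma rpow_const (hf : HasLogFDerivAt f L x) (hx : 0 < f x) (p : ℝ) :
    HasLogFDerivAt (fun y => f y ^ p) (p • L) x := by
  show HasFDerivAt _ _ x
  convert HasFDerivAt.rpow_const (p := p) hf (Or.inl hx.ne') using 1
  rw [smul_smul, smul_smul, Real.rpow_sub_one hx.ne']
  congr 1
  field_simp

end HasLogFDerivAt

lemma hasLogFDerivAt_apply {n : ℕ} {x : Fin n → ℝ} (r : Fin n) (hx : x r ≠ 0) :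
    HasLogFDerivAt (fun y => y r) ((x r)⁻¹ • ContinuousLinearMap.proj r) x :=
  .of_hasFDerivAt (hasFDerivAt_apply r x) hx

/-- For `L` the logarithmic derivative of `F`, this is the vector `(x_m ∂_m F / F)_m`. -/
def eulerCoeffs {n : ℕ} (L : (Fin n → ℝ) →L[ℝ] ℝ) (x : Fin n → ℝ) : Fin n → ℝ :=
  fun m => L (Pi.single m (x m))

section eulerCoeffs

variable {n : ℕ} (x : Fin n → ℝ)

lemma eulerCoeffs_add (L M : (Fin n → ℝ) →L[ℝ] ℝ) :
    eulerCoeffs (L + M) x = eulerCoeffs L x + eulerCoeffs M x := rfl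

lemma eulerCoeffs_smul (t : ℝ) (L : (Fin n → ℝ) →L[ℝ] ℝ) :
    eulerCoeffs (t • L) x = t • eulerCoeffs L x := rfl

lemma eulerCoeffs_proj (r : Fin n) :
    eulerCoeffs (ContinuousLinearMap.proj r) x = Pi.single r (x r) := by
  ext m
  by_cases h : m = r
  · subst h
    simp [eulerCoeffs]
  · simp [eulerCoeffs, h, Ne.symm h]

end eulerCoeffs

section pbracket

variable {n : ℕ} {A : Matrix (Fin n) (Fin n) ℝ}

lemma pbracket_antisymm (hA : Aᵀ = -A) (F G : (Fin n → ℝ) → ℝ) (x : Fin n → ℝ) :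
    pbracket A G F x = -pbracket A F G x := by
  unfold pbracket
  rw [Finset.sum_comm, ← Finset.sum_neg_distrib]
  refine Finset.sum_congr rfl fun m _ => ?_
  rw [← Finset.sum_neg_distrib]
  refine Finset.sum_congr rfl fun l _ => ?_
  rw [← transpose_apply A l m, hA, Matrix.neg_apply]
  ring

lemma pbracket_self (hA : Aᵀ = -A) (F : (Fin n → ℝ) → ℝ) (x : Fin n → ℝ) :
    pbracket A F F x = 0 :=
  self_eq_neg.mp (pbracket_antisymm hA F F x)

lemma pbracket_eq_dotProduct {F G : (Fin n → ℝ) → ℝ} {L M : (Fin n → ℝ) →L[ℝ] ℝ}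
    {x : Fin n → ℝ} (hF : HasLogFDerivAt F L x) (hG : HasLogFDerivAt G M x) :
    pbracket A F G x = F x * G x * (eulerCoeffs L x ⬝ᵥ A *ᵥ eulerCoeffs M x) := by
  have hsingle (m : Fin n) : Pi.single m (x m) = x m • Pi.single m (1 : ℝ) := by
    rw [← Pi.single_smul', smul_eq_mul, mul_one]
  simp only [pbracket, grad, HasFDerivAt.fderiv hF, HasFDerivAt.fderiv hG, eulerCoeffs,
    dotProduct, mulVec, Finset.mul_sum, hsingle, map_smul, _root_.smul_apply, smul_eq_mul]
  refine Finset.sum_congr rfl fun m _ => Finset.sum_congr rfl fun l _ => ?_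
  ring

end pbracket

/-- The `e`-th coordinate of the `p`-th `2 × 2` block (0-based: `x_{2p+1+e}` in the paper). -/
def blockIdx {j : ℕ} (p : Fin j) (e : Fin 2) : Fin (2 * (j + 1)) :=
  ⟨2 * p + e, by omega⟩

/-- `lastIdx j 0` and `lastIdx j 1` are the coordinates `n - 1` and `n` of the paper. -/
def lastIdx (j : ℕ) (e : Fin 2) : Fin (2 * (j + 1)) :=
  ⟨2 * j + e, by omega⟩

section typeJ00Mat

variable {j : ℕ} (a b c : ℕ → ℝ)

lemma typeJ00Mat_transpose : (typeJ00Mat j a b c)ᵀ = -typeJ00Mat j a b c := by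
  ext ⟨r, hr⟩ ⟨s, hs⟩
  simp only [transpose_apply, Matrix.neg_apply, typeJ00Mat, of_apply]
  split_ifs <;> first | omega | ring1 | (rw [‹s / 2 = r / 2›] <;> ring1)

lemma typeJ00Mat_apply_swap (r s : Fin (2 * (j + 1))) :
    typeJ00Mat j a b c s r = -typeJ00Mat j a b c r s := by
  rw [← transpose_apply (typeJ00Mat j a b c) r s, typeJ00Mat_transpose, Matrix.neg_apply]

lemma typeJ00Mat_apply_self (r : Fin (2 * (j + 1))) : typeJ00Mat j a b c r r = 0 :=
  self_eq_neg.mp (typeJ00Mat_apply_swap a b c r r)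

lemma typeJ00Mat_blockIdx_blockIdx {p q : Fin j} (hpq : p ≠ q) (e f : Fin 2) :
    typeJ00Mat j a b c (blockIdx p e) (blockIdx q f) =
      (b (p + 1) * c (q + 1) - b (q + 1) * c (p + 1)) / a (j + 1) := by
  have hpq' : (p : ℕ) ≠ q := Fin.val_ne_of_ne hpq
  have := p.isLt; have := q.isLt; have := e.isLt; have := f.isLt
  simp only [typeJ00Mat, of_apply, blockIdx]
  rw [if_neg (by omega), if_pos (by omega), if_neg (by omega),
    show (2 * p + e : ℕ) / 2 = p by omega, show (2 * q + f : ℕ) / 2 = q by omega]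

lemma typeJ00Mat_blockIdx_lastIdx_zero (p : Fin j) (e : Fin 2) :
    typeJ00Mat j a b c (blockIdx p e) (lastIdx j 0) = b (p + 1) := by
  have := p.isLt; have := e.isLt
  simp only [typeJ00Mat, of_apply, blockIdx, lastIdx]
  rw [if_neg (by omega), if_neg (by omega), if_pos (by omega), if_pos (by simp),
    show (2 * p + e : ℕ) / 2 = p by omega]

lemma typeJ00Mat_blockIdx_lastIdx_one (p : Fin j) (e : Fin 2) :
    typeJ00Mat j a b c (blockIdx p e) (lastIdx j 1) = c (p + 1) := by
  have := p.isLt; have := e.isLt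
  simp only [typeJ00Mat, of_apply, blockIdx, lastIdx]
  rw [if_neg (by omega), if_neg (by omega), if_pos (by omega), if_neg (by simp),
    show (2 * p + e : ℕ) / 2 = p by omega]

lemma typeJ00Mat_lastIdx_zero_one :
    typeJ00Mat j a b c (lastIdx j 0) (lastIdx j 1) = a (j + 1) := by
  simp [typeJ00Mat, lastIdx]

lemma typeJ00Mat_lastIdx_zero_blockIdx (p : Fin j) (e : Fin 2) :
    typeJ00Mat j a b c (lastIdx j 0) (blockIdx p e) = -b (p + 1) := by
  rw [typeJ00Mat_apply_swap, typeJ00Mat_blockIdx_lastIdx_zero]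

lemma typeJ00Mat_lastIdx_one_blockIdx (p : Fin j) (e : Fin 2) :
    typeJ00Mat j a b c (lastIdx j 1) (blockIdx p e) = -c (p + 1) := by
  rw [typeJ00Mat_apply_swap, typeJ00Mat_blockIdx_lastIdx_one]

lemma typeJ00Mat_lastIdx_one_zero :
    typeJ00Mat j a b c (lastIdx j 1) (lastIdx j 0) = -a (j + 1) := by
  rw [typeJ00Mat_apply_swap, typeJ00Mat_lastIdx_zero_one]

end typeJ00Mat

section typeJ00F

variable (j : ℕ) (a b c : ℕ → ℝ)

noncomputable def typeJ00LogDeriv (i : Fin j) (x : Fin (2 * (j + 1)) → ℝ) :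
    (Fin (2 * (j + 1)) → ℝ) →L[ℝ] ℝ :=
  (a (j + 1) * (x (blockIdx i 0) + x (blockIdx i 1))⁻¹) •
      (ContinuousLinearMap.proj (R := ℝ) (φ := fun _ => ℝ) (blockIdx i 0) +
        ContinuousLinearMap.proj (blockIdx i 1))
    + (-c (i + 1) * (x (lastIdx j 0))⁻¹) • ContinuousLinearMap.proj (lastIdx j 0)
    + (b (i + 1) * (x (lastIdx j 1))⁻¹) • ContinuousLinearMap.proj (lastIdx j 1)

variable {j} {x : Fin (2 * (j + 1)) → ℝ}

lemma hasLogFDerivAt_typeJ00F (i : Fin j) (hx : ∀ m, 0 < x m) :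
    HasLogFDerivAt (typeJ00F j a b c i) (typeJ00LogDeriv j a b c i x) x := by
  have hP := add_pos (hx (blockIdx i 0)) (hx (blockIdx i 1))
  have hsum : HasLogFDerivAt (fun y => y (blockIdx i 0) + y (blockIdx i 1))
      ((x (blockIdx i 0) + x (blockIdx i 1))⁻¹ •
        (ContinuousLinearMap.proj (blockIdx i 0) + ContinuousLinearMap.proj (blockIdx i 1))) x :=
    .of_hasFDerivAt ((hasFDerivAt_apply _ x).add (hasFDerivAt_apply _ x)) hP.ne'
  have h := ((hsum.rpow_const hP (a (j + 1))).mul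
    ((hasLogFDerivAt_apply (lastIdx j 0) (hx _).ne').rpow_const (hx _) (-c (i + 1)))).mul
    ((hasLogFDerivAt_apply (lastIdx j 1) (hx _).ne').rpow_const (hx _) (b (i + 1)))
  simp only [smul_smul] at h
  exact h

lemma eulerCoeffs_typeJ00LogDeriv_dotProduct_eq_zero {i k : Fin j} (hik : i ≠ k)
    (hx : ∀ m, 0 < x m) :
    eulerCoeffs (typeJ00LogDeriv j a b c i x) x ⬝ᵥ
      typeJ00Mat j a b c *ᵥ eulerCoeffs (typeJ00LogDeriv j a b c k x) x = 0 := by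
  simp only [typeJ00LogDeriv, eulerCoeffs_add, eulerCoeffs_smul, eulerCoeffs_proj,
    add_dotProduct, smul_dotProduct, single_dotProduct, mulVec, dotProduct_add, dotProduct_smul,
    dotProduct_single, smul_eq_mul, typeJ00Mat_blockIdx_blockIdx a b c hik,
    typeJ00Mat_blockIdx_lastIdx_zero, typeJ00Mat_blockIdx_lastIdx_one,
    typeJ00Mat_lastIdx_zero_blockIdx, typeJ00Mat_lastIdx_one_blockIdx,
    typeJ00Mat_lastIdx_zero_one, typeJ00Mat_lastIdx_one_zero, typeJ00Mat_apply_self]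
  have hPi := (add_pos (hx (blockIdx i 0)) (hx (blockIdx i 1))).ne'
  have hPk := (add_pos (hx (blockIdx k 0)) (hx (blockIdx k 1))).ne'
  have hu := (hx (lastIdx j 0)).ne'
  have hv := (hx (lastIdx j 1)).ne'
  field_simp
  -- the `K`-blocks contribute `a_{j+1}² · (X / a_{j+1}) = a_{j+1} · X`, valid also at `a_{j+1} = 0`
  linear_combination (x (blockIdx k 0) + x (blockIdx k 1)) *
    (b (i + 1) * c (k + 1) - b (k + 1) * c (i + 1)) * mul_self_mul_inv (a (j + 1))

end typeJ00F

theorem stmt13_general (j : ℕ) (a b c : ℕ → ℝ) (i k : Fin j) :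
    ∀ x : Fin (2 * (j + 1)) → ℝ, (∀ m, 0 < x m) →
      pbracket (typeJ00Mat j a b c) (typeJ00F j a b c i) (typeJ00F j a b c k) x = 0 := by
  intro x hx
  rcases eq_or_ne i k with rfl | hik
  · exact pbracket_self (typeJ00Mat_transpose a b c) _ x
  rw [pbracket_eq_dotProduct (hasLogFDerivAt_typeJ00F a b c i hx)
      (hasLogFDerivAt_typeJ00F a b c k hx),
    eulerCoeffs_typeJ00LogDeriv_dotProduct_eq_zero a b c hik hx, mul_zero]

/-- the integrals F_i of the even type [j,0,0] LV system pairwise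
Poisson commute with respect to the bracket {x_i,x_k} = A_{ik} x_i x_k. -/
theorem stmt13 (j : ℕ) (a b c : ℕ → ℝ) (ha : a (j + 1) ≠ 0) (i k : Fin j) :
    ∀ x : Fin (2 * (j + 1)) → ℝ, (∀ m, 0 < x m) →
      pbracket (typeJ00Mat j a b c) (typeJ00F j a b c i) (typeJ00F j a b c k) x = 0 :=
  stmt13_general j a b c i k
end

section
/- Define the antisymmetric (2k+1)×(2k+1) matrix N by, for r < l and j = 1, ..., k: N_{r,2j} = a_{3j−2} for r < 2j, N_{2j,2j+1} = a_{3j}, N_{r,2j+1} = a_{3j−1} for r < 2j. Assume all a_{3l+3} ≠ 0. Then the vector q with q₁ = a₃, q_{2j} = −a_{3j−1}·Π_{l=1}^{j−1}(a_{3l−2}−a_{3l−1}+a_{3l})/a_{3l+3}, q_{2j+1} = a_{3j−2}·Π_{l=1}^{j−1}(a_{3l−2}−a_{3l−1}+a_{3l})/a_{3l+3} lies in the null-space of N, i.e. N q = 0. -/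
open Real Finset

/-- The antisymmetric (2k+1)×(2k+1) matrix N of the odd type [0,k,0] LV system:
for 1-based indices R < L, N_{R,L} = a_{3m−2} if L = 2m; N_{R,L} = a_{3m−1} if
L = 2m+1 and R < 2m; N_{2m,2m+1} = a_{3m}; and N_{L,R} = −N_{R,L}. -/
noncomputable def nMat (k : ℕ) (a : ℕ → ℝ) : Matrix (Fin (2 * k + 1)) (Fin (2 * k + 1)) ℝ :=
  Matrix.of fun r l =>
    let R := r.val + 1; let L := l.val + 1
    if R < L then
      (if L % 2 = 0 then a (3 * (L / 2) - 2)
       else if R = L - 1 then a (3 * (L / 2))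
       else a (3 * (L / 2) - 1))
    else if L < R then
      -(if R % 2 = 0 then a (3 * (R / 2) - 2)
        else if L = R - 1 then a (3 * (R / 2))
        else a (3 * (R / 2) - 1))
    else 0

/-- The vector q with q₁ = a₃,
q_{2m} = −a_{3m−1}·Π_{l=1}^{m−1}(a_{3l−2}−a_{3l−1}+a_{3l})/a_{3l+3},
q_{2m+1} = a_{3m−2}·Π_{l=1}^{m−1}(a_{3l−2}−a_{3l−1}+a_{3l})/a_{3l+3} (1-based). -/
noncomputable def qVec (k : ℕ) (a : ℕ → ℝ) : Fin (2 * k + 1) → ℝ := fun idx =>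
  let i := idx.val + 1
  if i = 1 then a 3
  else if i % 2 = 0 then
    -a (3 * (i / 2) - 1) *
      ∏ l ∈ Finset.Icc 1 (i / 2 - 1), (a (3 * l - 2) - a (3 * l - 1) + a (3 * l)) / a (3 * l + 3)
  else
    a (3 * (i / 2) - 2) *
      ∏ l ∈ Finset.Icc 1 (i / 2 - 1), (a (3 * l - 2) - a (3 * l - 1) + a (3 * l)) / a (3 * l + 3)

namespace Stmt14Aux

/-- 1-based entry of `nMat` as a function on naturals. -/
noncomputable def Nn (a : ℕ → ℝ) (R L : ℕ) : ℝ :=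
  if R < L then
    (if L % 2 = 0 then a (3 * (L / 2) - 2)
     else if R = L - 1 then a (3 * (L / 2))
     else a (3 * (L / 2) - 1))
  else if L < R then
    -(if R % 2 = 0 then a (3 * (R / 2) - 2)
      else if L = R - 1 then a (3 * (R / 2))
      else a (3 * (R / 2) - 1))
  else 0

/-- 1-based component of `qVec` as a function on naturals. -/
noncomputable def Qn (a : ℕ → ℝ) (i : ℕ) : ℝ :=
  if i = 1 then a 3
  else if i % 2 = 0 then
    -a (3 * (i / 2) - 1) *
      ∏ l ∈ Finset.Icc 1 (i / 2 - 1), (a (3 * l - 2) - a (3 * l - 1) + a (3 * l)) / a (3 * l + 3)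
  else
    a (3 * (i / 2) - 2) *
      ∏ l ∈ Finset.Icc 1 (i / 2 - 1), (a (3 * l - 2) - a (3 * l - 1) + a (3 * l)) / a (3 * l + 3)

noncomputable def P (a : ℕ → ℝ) (t : ℕ) : ℝ :=
  ∏ l ∈ Finset.Icc 1 t, (a (3 * l - 2) - a (3 * l - 1) + a (3 * l)) / a (3 * l + 3)

lemma P_succ (a : ℕ → ℝ) (t : ℕ) :
    P a (t + 1) = P a t * ((a (3 * t + 1) - a (3 * t + 2) + a (3 * t + 3)) / a (3 * t + 6)) := by
  have h1 : 3 * (t + 1) - 2 = 3 * t + 1 := by omega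
  have h2 : 3 * (t + 1) - 1 = 3 * t + 2 := by omega
  have h3 : 3 * (t + 1) = 3 * t + 3 := by omega
  have h4 : 3 * (t + 1) + 3 = 3 * t + 6 := by omega
  rw [P, Finset.prod_Icc_succ_top (by omega), h4, h1, h2, h3, ← P]

lemma Qn_one (a : ℕ → ℝ) : Qn a 1 = a 3 := by simp [Qn]

lemma Qn_even (a : ℕ → ℝ) (m : ℕ) : Qn a (2 * m + 2) = -a (3 * m + 2) * P a m := by
  have h0 : ¬ (2 * m + 2 = 1) := by omega
  have h1 : (2 * m + 2) % 2 = 0 := by omega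
  have h2 : (2 * m + 2) / 2 = m + 1 := by omega
  have h3 : 3 * (m + 1) - 1 = 3 * m + 2 := by omega
  rw [Qn, if_neg h0, if_pos h1, h2, h3]
  have h4 : m + 1 - 1 = m := by omega
  rw [h4, ← P]

lemma Qn_odd (a : ℕ → ℝ) (m : ℕ) : Qn a (2 * m + 3) = a (3 * m + 1) * P a m := by
  have h0 : ¬ (2 * m + 3 = 1) := by omega
  have h1 : ¬ ((2 * m + 3) % 2 = 0) := by omega
  have h2 : (2 * m + 3) / 2 = m + 1 := by omega
  have h3 : 3 * (m + 1) - 2 = 3 * m + 1 := by omega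
  rw [Qn, if_neg h0, if_neg h1, h2, h3]
  have h4 : m + 1 - 1 = m := by omega
  rw [h4, ← P]

lemma Nn_diag (a : ℕ → ℝ) (R : ℕ) : Nn a R R = 0 := by
  rw [Nn, if_neg (by omega), if_neg (by omega)]

lemma Nn_upper_even (a : ℕ → ℝ) (R m : ℕ) (h : R < 2 * m + 2) :
    Nn a R (2 * m + 2) = a (3 * m + 1) := by
  have h1 : (2 * m + 2) % 2 = 0 := by omega
  have h2 : 3 * ((2 * m + 2) / 2) - 2 = 3 * m + 1 := by omega
  rw [Nn, if_pos h, if_pos h1, h2]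

lemma Nn_upper_odd (a : ℕ → ℝ) (R m : ℕ) (h : R < 2 * m + 2) :
    Nn a R (2 * m + 3) = a (3 * m + 2) := by
  have h1 : ¬ ((2 * m + 3) % 2 = 0) := by omega
  have h2 : ¬ (R = 2 * m + 3 - 1) := by omega
  have h3 : 3 * ((2 * m + 3) / 2) - 1 = 3 * m + 2 := by omega
  rw [Nn, if_pos (by omega), if_neg h1, if_neg h2, h3]

lemma Nn_super (a : ℕ → ℝ) (m : ℕ) : Nn a (2 * m + 2) (2 * m + 3) = a (3 * m + 3) := by
  have h1 : ¬ ((2 * m + 3) % 2 = 0) := by omega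
  have h2 : 2 * m + 2 = 2 * m + 3 - 1 := by omega
  have h3 : 3 * ((2 * m + 3) / 2) = 3 * m + 3 := by omega
  rw [Nn, if_pos (by omega), if_neg h1, if_pos h2, h3]

lemma Nn_lower_even (a : ℕ → ℝ) (m L : ℕ) (h : L < 2 * m + 2) :
    Nn a (2 * m + 2) L = -a (3 * m + 1) := by
  have h1 : (2 * m + 2) % 2 = 0 := by omega
  have h2 : 3 * ((2 * m + 2) / 2) - 2 = 3 * m + 1 := by omega
  rw [Nn, if_neg (by omega), if_pos h, if_pos h1, h2]

lemma Nn_lower_odd (a : ℕ → ℝ) (m L : ℕ) (h : L < 2 * m + 2) :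
    Nn a (2 * m + 3) L = -a (3 * m + 2) := by
  have h1 : ¬ ((2 * m + 3) % 2 = 0) := by omega
  have h2 : ¬ (L = 2 * m + 3 - 1) := by omega
  have h3 : 3 * ((2 * m + 3) / 2) - 1 = 3 * m + 2 := by omega
  rw [Nn, if_neg (by omega), if_pos (by omega), if_neg h1, if_neg h2, h3]

lemma Nn_sub (a : ℕ → ℝ) (m : ℕ) : Nn a (2 * m + 3) (2 * m + 2) = -a (3 * m + 3) := by
  have h1 : ¬ ((2 * m + 3) % 2 = 0) := by omega
  have h2 : 2 * m + 2 = 2 * m + 3 - 1 := by omega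
  have h3 : 3 * ((2 * m + 3) / 2) = 3 * m + 3 := by omega
  rw [Nn, if_neg (by omega), if_pos (by omega), if_neg h1, if_pos h2, h3]

lemma tail (a : ℕ → ℝ) (j R : ℕ) (hR : R ≤ 2 * j + 1) (k : ℕ) (hk : j ≤ k) :
    ∑ i ∈ Ico (2 * j + 1) (2 * k + 1), Nn a R (i + 1) * Qn a (i + 1) = 0 := by
  induction k, hk using Nat.le_induction with
  | base => simp
  | succ n hn ih =>
    have e : 2 * (n + 1) + 1 = (2 * n + 1) + 1 + 1 := by ring
    rw [e, Finset.sum_Ico_succ_top (by omega), Finset.sum_Ico_succ_top (by omega), ih]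
    have e1 : 2 * n + 1 + 1 = 2 * n + 2 := by ring
    have e2 : 2 * n + 1 + 1 + 1 = 2 * n + 3 := by ring
    rw [e1, e2, Nn_upper_even a R n (by omega), Qn_even a n,
      Nn_upper_odd a R n (by omega), Qn_odd a n]
    ring

lemma Ssum (a : ℕ → ℝ) (ha : ∀ l : ℕ, 1 ≤ l → a (3 * l + 3) ≠ 0) (m : ℕ) :
    ∑ i ∈ Finset.range (2 * m + 1), Qn a (i + 1) = a (3 * m + 3) * P a m := by
  induction m with
  | zero => simp [Qn_one, P]
  | succ m ih =>
    have e : 2 * (m + 1) + 1 = (2 * m + 1) + 1 + 1 := by ring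
    rw [e, Finset.sum_range_succ, Finset.sum_range_succ, ih]
    have e1 : 2 * m + 1 + 1 = 2 * m + 2 := by ring
    have e2 : 2 * m + 1 + 1 + 1 = 2 * m + 3 := by ring
    rw [e1, e2, Qn_even a m, Qn_odd a m, P_succ a m]
    have hne : a (3 * m + 6) ≠ 0 := by
      have := ha (m + 1) (by omega)
      have e3 : 3 * (m + 1) + 3 = 3 * m + 6 := by omega
      rwa [e3] at this
    have e4 : 3 * (m + 1) + 3 = 3 * m + 6 := by omega
    rw [e4]
    field_simp
    ring

lemma main (a : ℕ → ℝ) (ha : ∀ l : ℕ, 1 ≤ l → a (3 * l + 3) ≠ 0) (k R0 : ℕ)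
    (hR : R0 < 2 * k + 1) :
    ∑ i ∈ Finset.range (2 * k + 1), Nn a (R0 + 1) (i + 1) * Qn a (i + 1) = 0 := by
  obtain h0 | ⟨m, rfl⟩ | ⟨m, rfl⟩ : R0 = 0 ∨ (∃ m, R0 = 2 * m + 1) ∨ (∃ m, R0 = 2 * m + 2) := by
    rcases Nat.even_or_odd R0 with ⟨c, hc⟩ | ⟨c, hc⟩
    · rcases Nat.eq_zero_or_pos c with h | h
      · left; omega
      · right; right; exact ⟨c - 1, by omega⟩
    · right; left; exact ⟨c, by omega⟩
  · subst h0
    rw [Finset.range_eq_Ico, ← Finset.sum_Ico_consecutive _ (show 0 ≤ 1 by omega)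
      (show 1 ≤ 2 * k + 1 by omega)]
    have h1 : ∑ i ∈ Ico 0 1, Nn a (0 + 1) (i + 1) * Qn a (i + 1) = 0 := by
      simp [Nn_diag]
    rw [h1, zero_add]
    have := tail a 0 1 (by omega) k (by omega)
    simpa using this
  · -- R = 2m+2
    have hmk : m + 1 ≤ k := by omega
    rw [Finset.range_eq_Ico, ← Finset.sum_Ico_consecutive _ (show 0 ≤ 2 * m + 3 by omega)
      (show 2 * m + 3 ≤ 2 * k + 1 by omega),
      show (2 * m + 3 : ℕ) = (2 * m + 1) + 1 + 1 from by ring,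
      Finset.sum_Ico_succ_top (by omega), Finset.sum_Ico_succ_top (by omega)]
    have htail := tail a (m + 1) (2 * m + 2) (by omega) k hmk
    rw [show 2 * (m + 1) + 1 = (2 * m + 1) + 1 + 1 from by ring] at htail
    rw [htail, add_zero]
    have hchunk : ∑ i ∈ Ico 0 (2 * m + 1), Nn a (2 * m + 1 + 1) (i + 1) * Qn a (i + 1)
        = -a (3 * m + 1) * (a (3 * m + 3) * P a m) := by
      rw [Finset.sum_congr rfl (fun i hi => by
        rw [show (2 * m + 1 + 1 : ℕ) = 2 * m + 2 from by ring,
          Nn_lower_even a m (i + 1) (by simp at hi; omega)]),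
        ← Finset.range_eq_Ico, ← Finset.mul_sum, Ssum a ha m]
    rw [hchunk]
    rw [show (2 * m + 1 + 1 : ℕ) = 2 * m + 2 from by ring,
      show (2 * m + 1 + 1 + 1 : ℕ) = 2 * m + 3 from by ring,
      Nn_diag, Nn_super, Qn_odd]
    ring
  · -- R = 2m+3
    have hmk : m + 1 ≤ k := by omega
    rw [Finset.range_eq_Ico, ← Finset.sum_Ico_consecutive _ (show 0 ≤ 2 * m + 3 by omega)
      (show 2 * m + 3 ≤ 2 * k + 1 by omega),
      show (2 * m + 3 : ℕ) = (2 * m + 1) + 1 + 1 from by ring,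
      Finset.sum_Ico_succ_top (by omega), Finset.sum_Ico_succ_top (by omega)]
    have htail := tail a (m + 1) (2 * m + 3) (by omega) k hmk
    rw [show 2 * (m + 1) + 1 = (2 * m + 1) + 1 + 1 from by ring] at htail
    rw [htail, add_zero]
    have hchunk : ∑ i ∈ Ico 0 (2 * m + 1), Nn a (2 * m + 2 + 1) (i + 1) * Qn a (i + 1)
        = -a (3 * m + 2) * (a (3 * m + 3) * P a m) := by
      rw [Finset.sum_congr rfl (fun i hi => by
        rw [show (2 * m + 2 + 1 : ℕ) = 2 * m + 3 from by ring,
          Nn_lower_odd a m (i + 1) (by simp at hi; omega)]),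
        ← Finset.range_eq_Ico, ← Finset.mul_sum, Ssum a ha m]
    rw [hchunk]
    rw [show (2 * m + 2 + 1 : ℕ) = 2 * m + 3 from by ring,
      show (2 * m + 1 + 1 : ℕ) = 2 * m + 2 from by ring,
      show (2 * m + 1 + 1 + 1 : ℕ) = 2 * m + 3 from by ring,
      Nn_diag, Nn_sub, Qn_even]
    ring

end Stmt14Aux

/-- the vector q lies in the null-space of N. -/
theorem stmt14 (k : ℕ) (a : ℕ → ℝ) (ha : ∀ l : ℕ, 1 ≤ l → a (3 * l + 3) ≠ 0) :
    (nMat k a).mulVec (qVec k a) = 0 := by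
  funext r
  simp only [Matrix.mulVec, dotProduct, Pi.zero_apply]
  calc ∑ x, nMat k a r x * qVec k a x
      = ∑ i ∈ Finset.range (2 * k + 1),
          Stmt14Aux.Nn a (r.val + 1) (i + 1) * Stmt14Aux.Qn a (i + 1) := by
        rw [← Fin.sum_univ_eq_sum_range]
        exact Finset.sum_congr rfl (fun x _ => rfl)
    _ = 0 := Stmt14Aux.main a ha k r.val r.2
end

section
/- For the inhomogeneous 3-dimensional Lotka-Volterra system ẋ_i = x_i(r_i + (Ax)_i) with antisymmetric A given by A_{12}=a₁, A_{13}=A_{23}=b₁, and r = (r, r, 0), the vector field is Hamiltonian with respect to the bracket {x_i,x_j}=A_{ij}x_ix_j and Hamiltonian H = x₁+x₂+x₃ + (r/a₁)·ln(x₂/x₁): that is, ẋ_i = {x_i, H} for i=1,2,3 on ℝ³_{>0} (assuming a₁ ≠ 0). -/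
open Real Finset

/-- the inhomogeneous 3-dim LV system with r = (r,r,0) is Hamiltonian
with Hamiltonian H = x₁+x₂+x₃ + (r/a₁)·ln(x₂/x₁): ẋ_i = {x_i, H} (a₁ ≠ 0). -/
theorem stmt16 (a₁ b₁ r : ℝ) (ha₁ : a₁ ≠ 0) :
    let A : Matrix (Fin 3) (Fin 3) ℝ := !![0, a₁, b₁; -a₁, 0, b₁; -b₁, -b₁, 0]
    let H : (Fin 3 → ℝ) → ℝ :=
      fun y => y 0 + y 1 + y 2 + (r / a₁) * Real.log (y 1 / y 0)
    ∀ x : Fin 3 → ℝ, (∀ i, 0 < x i) → ∀ i : Fin 3,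
      lvField A ![r, r, 0] x i = pbracket A (fun y => y i) H x := by
  intro A H x hx i
  have hx0 := (hx 0).ne'
  have hx1 := (hx 1).ne'
  -- projections
  set P : Fin 3 → ((Fin 3 → ℝ) →L[ℝ] ℝ) :=
    fun k => (ContinuousLinearMap.proj k : (Fin 3 → ℝ) →L[ℝ] ℝ) with hP
  have hy : ∀ k : Fin 3, HasFDerivAt (fun y : Fin 3 → ℝ => y k) (P k) x :=
    fun k => (P k).hasFDerivAt
  -- grad of coordinates
  have hgrad_coord : ∀ k j : Fin 3, grad (fun y => y k) x j = if k = j then 1 else 0 := by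
    intro k j
    rw [grad, (hy k).fderiv]
    simp [hP, Pi.single_apply, eq_comm]
  have hev : H =ᶠ[nhds x] fun y => y 0 + y 1 + y 2 + (r / a₁) * (Real.log (y 1) - Real.log (y 0)) := by
    have e0 : ∀ᶠ y : Fin 3 → ℝ in nhds x, y 0 ≠ 0 :=
      (continuous_apply (0 : Fin 3)).continuousAt.eventually_ne hx0
    have e1 : ∀ᶠ y : Fin 3 → ℝ in nhds x, y 1 ≠ 0 :=
      (continuous_apply (1 : Fin 3)).continuousAt.eventually_ne hx1
    filter_upwards [e0, e1] with y h0 h1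
    simp [H, Real.log_div h1 h0]
  have hH : HasFDerivAt H
      (P 0 + P 1 + P 2 + (r / a₁) • ((x 1)⁻¹ • P 1 - (x 0)⁻¹ • P 0)) x := by
    have hH' : HasFDerivAt (fun y : Fin 3 → ℝ => y 0 + y 1 + y 2 +
        (r / a₁) * (Real.log (y 1) - Real.log (y 0)))
        (P 0 + P 1 + P 2 + (r / a₁) • ((x 1)⁻¹ • P 1 - (x 0)⁻¹ • P 0)) x :=
      (((hy 0).add (hy 1)).add (hy 2)).add
        ((((hy 1).log hx1).sub ((hy 0).log hx0)).const_mul (r / a₁))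
    exact hH'.congr_of_eventuallyEq hev
  have hgH : ∀ j : Fin 3, grad H x j =
      (if (0:Fin 3) = j then 1 else 0) + (if (1:Fin 3) = j then 1 else 0) +
      (if (2:Fin 3) = j then 1 else 0) +
      (r / a₁) * ((x 1)⁻¹ * (if (1:Fin 3) = j then 1 else 0) -
        (x 0)⁻¹ * (if (0:Fin 3) = j then 1 else 0)) := by
    intro j
    rw [grad, hH.fderiv]
    simp [hP, Pi.single_apply, eq_comm]
  have h0 : grad H x 0 = 1 - (r / a₁) / x 0 := by
    rw [hgH 0]; norm_num [Fin.ext_iff, div_eq_mul_inv]; try ring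
  have h1 : grad H x 1 = 1 + (r / a₁) / x 1 := by
    rw [hgH 1]; norm_num [Fin.ext_iff, div_eq_mul_inv]; try ring
  have h2 : grad H x 2 = 1 := by
    rw [hgH 2]; norm_num [Fin.ext_iff]
  rcases (by decide : ∀ j : Fin 3, j = 0 ∨ j = 1 ∨ j = 2) i with h|h|h <;> subst h <;>
    simp only [lvField, pbracket, Fin.sum_univ_three, hgrad_coord, h0, h1, h2, A,
      Matrix.cons_val', Matrix.cons_val_zero, Matrix.cons_val_one, Matrix.head_cons,
      Matrix.cons_val_fin_one, Matrix.empty_val', Matrix.head_fin_const,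
      Matrix.cons_val_two, Matrix.tail_cons, Matrix.of_apply] <;>
    norm_num [Fin.ext_iff] <;> field_simp <;> ring
end
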